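/- arXiv:1805.06365 — 5 statements merged into one kernel-verified Lean document; each statement's English description precedes it below -/
import Mathlib

section
/- Let H be a complex Hilbert space and let L be a bounded self-adjoint operator on H. Let λ be a nonzero complex number with |arg λ| < π (i.e. λ does not lie on the closed negative real axis), and let √λ denote the principal branch of the square root. Then the operator I + i·(√(2λ)/2)·L is invertible in the algebra of bounded operators on H, and its inverse satisfies the operator norm bound ‖(I + i·(√(2λ)/2)·L)^{-1}‖ ≤ 1/cos((arg λ)/2). -/
/-!
The operator `1 + μ • L` with `μ = i √(2λ) / 2` is `f(L)` for `f z = 1 + μ z`, and `L` has real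
spectrum, so by the isometric continuous functional calculus it suffices that `|1 + t μ| ≥
cos (arg λ / 2)` for real `t`. The left side is at least the distance `|sin (arg μ)|` from `0` to
the line `1 + ℝ μ`, and `arg μ = π / 2 + arg λ / 2` because `arg √(2λ) = arg λ / 2`.
-/

open Complex ComplexConjugate

lemma Complex.abs_im_le_norm_mul_norm_one_add_real_mul (z : ℂ) (t : ℝ) :
    |z.im| ≤ ‖z‖ * ‖1 + t * z‖ := by
  have him : (conj z * (1 + t * z)).im = -z.im := by
    simp only [mul_im, conj_re, conj_im, add_re, add_im, one_re, one_im, mul_re,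
      ofReal_re, ofReal_im]
    ring
  calc |z.im| = |(conj z * (1 + t * z)).im| := by rw [him, abs_neg]
    _ ≤ ‖conj z * (1 + t * z)‖ := abs_im_le_norm _
    _ = ‖z‖ * ‖1 + t * z‖ := by rw [norm_mul, norm_conj]

lemma Complex.cos_arg_div_two_le_norm_one_add_real_mul_I_mul_cpow_half (x : ℂ) (t : ℝ) :
    Real.cos (x.arg / 2) ≤ ‖1 + t * (I * x ^ (1 / 2 : ℂ))‖ := by
  rcases eq_or_ne x 0 with rfl | hx
  · simp
  have hhalf : (1 / 2 : ℂ) = ((1 / 2 : ℝ) : ℂ) := by push_cast; rfl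
  have hr : 0 < ‖x‖ ^ (1 / 2 : ℝ) := by positivity
  have key := abs_im_le_norm_mul_norm_one_add_real_mul (I * x ^ (1 / 2 : ℂ)) t
  rw [hhalf] at key ⊢
  rw [I_mul_im, norm_mul, norm_I, one_mul, cpow_ofReal_re, norm_cpow_real,
    abs_mul, abs_of_pos hr, mul_comm x.arg, one_div_mul_eq_div] at key
  exact (le_abs_self _).trans (le_of_mul_le_mul_left key hr)

section FunctionalCalculus

variable {𝕜 A : Type*} {p : A → Prop} [RCLike 𝕜] [NormedRing A] [StarRing A]
  [NormedAlgebra 𝕜 A] [IsometricContinuousFunctionalCalculus 𝕜 A p]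

lemma isUnit_cfc_and_norm_inverse_cfc_le {f : 𝕜 → 𝕜} {a : A} {δ : ℝ} (hδ : 0 < δ)
    (hf_bdd : ∀ x ∈ spectrum 𝕜 a, δ ≤ ‖f x‖)
    (hf : ContinuousOn f (spectrum 𝕜 a) := by cfc_cont_tac) (ha : p a := by cfc_tac) :
    IsUnit (cfc f a) ∧ ‖Ring.inverse (cfc f a)‖ ≤ δ⁻¹ := by
  have hf_ne : ∀ x ∈ spectrum 𝕜 a, f x ≠ 0 := fun x hx h0 ↦ by
    simpa [h0] using (hδ.trans_le (hf_bdd x hx))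
  refine ⟨isUnit_cfc f a hf ha hf_ne, ?_⟩
  rw [← cfc_inv f a hf_ne]
  refine norm_cfc_le (inv_nonneg.mpr hδ.le) fun x hx ↦ ?_
  rw [norm_inv]
  exact inv_anti₀ hδ (hf_bdd x hx)

end FunctionalCalculus

lemma IsSelfAdjoint.isUnit_one_add_smul_and_norm_inverse_le {A : Type*} [CStarAlgebra A]
    {a : A} (ha : IsSelfAdjoint a) (μ : ℂ) {δ : ℝ} (hδ : 0 < δ)
    (h : ∀ t : ℝ, δ ≤ ‖1 + t * μ‖) :
    IsUnit (1 + μ • a) ∧ ‖Ring.inverse (1 + μ • a)‖ ≤ δ⁻¹ := by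
  have hcfc : 1 + μ • a = cfc (fun z : ℂ ↦ 1 + μ * z) a := by
    rw [cfc_const_add .., cfc_const_mul_id .., map_one]
  rw [hcfc]
  refine isUnit_cfc_and_norm_inverse_cfc_le hδ fun z hz ↦ ?_
  rw [ha.mem_spectrum_eq_re hz, mul_comm]
  exact h z.re

theorem stmt0_general {H : Type*} [NormedAddCommGroup H] [InnerProductSpace ℂ H] [CompleteSpace H]
    (L : H →L[ℂ] H) (hL : IsSelfAdjoint L)
    (lam : ℂ) (harg : |lam.arg| < Real.pi) :
    IsUnit (1 + ((Complex.I * (2 * lam) ^ (1 / 2 : ℂ)) / 2) • L) ∧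
      ‖Ring.inverse (1 + ((Complex.I * (2 * lam) ^ (1 / 2 : ℂ)) / 2) • L)‖
        ≤ 1 / Real.cos (lam.arg / 2) := by
  have hcos : 0 < Real.cos (lam.arg / 2) := by
    apply Real.cos_pos_of_mem_Ioo
    constructor <;> linarith [abs_lt.mp harg]
  rw [one_div (Real.cos _)]
  refine hL.isUnit_one_add_smul_and_norm_inverse_le _ hcos fun t ↦ ?_
  have h := cos_arg_div_two_le_norm_one_add_real_mul_I_mul_cpow_half (2 * lam) (t / 2)
  rw [← ofReal_ofNat, arg_real_mul _ two_pos] at h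
  convert h using 3
  push_cast
  ring

/-- Let `H` be a complex Hilbert space and `L` a bounded self-adjoint
operator on `H`. For `λ ≠ 0` with `|arg λ| < π` (principal argument), the operator
`I + i·(√(2λ)/2)·L` (principal square root) is invertible and its inverse has operator norm
at most `1 / cos((arg λ)/2)`. -/
theorem stmt0 {H : Type*} [NormedAddCommGroup H] [InnerProductSpace ℂ H] [CompleteSpace H]
    (L : H →L[ℂ] H) (hL : IsSelfAdjoint L)
    (lam : ℂ) (hlam : lam ≠ 0) (harg : |lam.arg| < Real.pi) :
    IsUnit (1 + ((Complex.I * (2 * lam) ^ (1 / 2 : ℂ)) / 2) • L) ∧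
      ‖Ring.inverse (1 + ((Complex.I * (2 * lam) ^ (1 / 2 : ℂ)) / 2) • L)‖
        ≤ 1 / Real.cos (lam.arg / 2) :=
  stmt0_general L hL lam harg
end

section
/- Let 0 < ρ < 1 and let λ belong to the cardioid domain Card_ρ = {λ ∈ ℂ : λ ≠ 0, |arg λ| < π, |λ| < ρ·cos²((arg λ)/2)}. Let H be a complex Hilbert space and L a bounded self-adjoint operator on H. Then the operator √λ·(I + i·(√(2λ)/2)·L)^{-1} is well defined and its operator norm is strictly less than √ρ. -/
/-!
Since `L` is self-adjoint, `1 + μL` with `μ = i√(2λ)/2` is normal and its spectrum lies on the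
line `{1 + μt : t ∈ ℝ}`. That line passes through `1` in the direction `i√λ`, so its distance
from `0` is `cos (arg √λ) = cos (arg λ / 2) =: c > 0`. The continuous functional calculus then
makes `1 + μL` invertible with `‖(1 + μL)⁻¹‖ ≤ 1 / c`, so `‖√λ (1 + μL)⁻¹‖ ≤ √‖λ‖ / c`, which is
less than `√ρ` precisely by the cardioid condition `‖λ‖ < ρ c²`.
-/

namespace Complex

lemma cos_arg_le_norm_one_add_I_mul_ofReal (w : ℂ) (t : ℝ) :
    Real.cos (arg w) ≤ ‖1 + I * w * t‖ := by
  rcases eq_or_ne w 0 with rfl | hw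
  · simp
  rw [cos_arg hw, div_le_iff₀ (norm_pos_iff.2 hw)]
  refine (le_abs_self _).trans (abs_le_of_sq_le_sq ?_ (by positivity))
  rw [mul_pow, Complex.sq_norm, Complex.sq_norm, normSq_apply, normSq_apply]
  simp only [add_re, one_re, mul_re, I_re, I_im, ofReal_re, ofReal_im, add_im, one_im, mul_im]
  -- Lagrange's identity: `(a² + b²)((1 - bt)² + (at)²) - a² = (a²t - b + b²t)²`
  nlinarith [sq_nonneg (w.re ^ 2 * t - w.im + w.im ^ 2 * t)]

lemma arg_cpow_one_half (x : ℂ) : arg (x ^ (1 / 2 : ℂ)) = arg x / 2 := by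
  rcases eq_or_ne x 0 with rfl | hx
  · simp
  have hθ : arg x * (1 / 2) ∈ Set.Ioc (-Real.pi) Real.pi :=
    ⟨by linarith [neg_pi_lt_arg x, Real.pi_pos], by linarith [arg_le_pi x, Real.pi_pos]⟩
  rw [show (1 / 2 : ℂ) = ((1 / 2 : ℝ) : ℂ) by norm_num, cpow_ofReal, arg_real_mul _ (by positivity),
    ofReal_cos, ofReal_sin, arg_cos_add_sin_mul_I hθ, mul_one_div]

lemma norm_cpow_one_half (x : ℂ) : ‖x ^ (1 / 2 : ℂ)‖ = √‖x‖ := by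
  rw [show (1 / 2 : ℂ) = ((1 / 2 : ℝ) : ℂ) by norm_num, norm_cpow_real, Real.sqrt_eq_rpow, one_div]

end Complex

section CStarAlgebra

variable {A : Type*} [CStarAlgebra A]

lemma cfc_one_add_mul_id (μ : ℂ) (a : A) [IsStarNormal a] :
    cfc (fun z ↦ 1 + μ * z) a = 1 + μ • a := by
  rw [cfc_const_add 1 (μ * ·) a, cfc_const_mul_id μ a, map_one]

lemma norm_ringInverse_cfc_le {a : A} [IsStarNormal a] {f : ℂ → ℂ} {c : ℝ} (hc : 0 < c)
    (h : ∀ z ∈ spectrum ℂ a, c ≤ ‖f z‖) (hf : ContinuousOn f (spectrum ℂ a) := by cfc_cont_tac) :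
    ‖Ring.inverse (cfc f a)‖ ≤ c⁻¹ := by
  rw [← cfc_inv f a fun z hz ↦ norm_pos_iff.mp (hc.trans_le (h z hz))]
  refine norm_cfc_le (by positivity) fun z hz ↦ ?_
  rw [norm_inv]
  exact inv_anti₀ hc (h z hz)

end CStarAlgebra

open Complex

theorem stmt1_general {H : Type*} [NormedAddCommGroup H] [InnerProductSpace ℂ H] [CompleteSpace H]
    (ρ : ℝ)
    (lam : ℂ) (harg : |lam.arg| < Real.pi)
    (hcard : ‖lam‖ < ρ * Real.cos (lam.arg / 2) ^ 2)
    (L : H →L[ℂ] H) (hL : IsSelfAdjoint L) :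
    IsUnit (1 + ((Complex.I * (2 * lam) ^ (1 / 2 : ℂ)) / 2) • L) ∧
      ‖(lam ^ (1 / 2 : ℂ)) •
          Ring.inverse (1 + ((Complex.I * (2 * lam) ^ (1 / 2 : ℂ)) / 2) • L)‖
        < Real.sqrt ρ := by
  set μ := Complex.I * (2 * lam) ^ (1 / 2 : ℂ) / 2
  set c := Real.cos (lam.arg / 2)
  have hc : 0 < c := by
    obtain ⟨hlo, hhi⟩ := abs_lt.mp harg
    exact Real.cos_pos_of_mem_Ioo ⟨by linarith, by linarith⟩
  have hspec : ∀ z ∈ spectrum ℂ L, c ≤ ‖1 + μ * z‖ := by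
    intro z hz
    obtain ⟨t, rfl⟩ : ∃ t : ℝ, z = t := ⟨z.re, hL.mem_spectrum_eq_re hz⟩
    have harg_two_mul : (2 * lam).arg = lam.arg := by exact_mod_cast arg_real_mul lam two_pos
    have h := cos_arg_le_norm_one_add_I_mul_ofReal ((2 * lam) ^ (1 / 2 : ℂ)) (t / 2)
    rw [arg_cpow_one_half, harg_two_mul] at h
    convert h using 3
    push_cast
    ring
  have := hL.isStarNormal
  rw [← cfc_one_add_mul_id]
  refine ⟨(isUnit_cfc_iff _ L).2 fun z hz ↦ norm_pos_iff.mp (hc.trans_le (hspec z hz)), ?_⟩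
  calc ‖lam ^ (1 / 2 : ℂ) • Ring.inverse (cfc (fun z ↦ 1 + μ * z) L)‖
      ≤ √‖lam‖ * c⁻¹ := by
        rw [norm_smul, norm_cpow_one_half]
        gcongr
        exact norm_ringInverse_cfc_le hc hspec
    _ < √ρ := by
        rw [← div_eq_mul_inv, div_lt_iff₀ hc, ← Real.sqrt_sq hc.le,
          ← Real.sqrt_mul' _ (sq_nonneg c)]
        exact Real.sqrt_lt_sqrt (norm_nonneg lam) hcard

/-- For `0 < ρ < 1` and `λ` in the cardioid domain
`Card_ρ = {λ ∈ ℂ : λ ≠ 0, |arg λ| < π, |λ| < ρ·cos²((arg λ)/2)}`, and `L` a bounded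
self-adjoint operator on a complex Hilbert space `H`, the operator
`√λ·(I + i·(√(2λ)/2)·L)⁻¹` is well defined and its operator norm is strictly
less than `√ρ`. -/
theorem stmt1 {H : Type*} [NormedAddCommGroup H] [InnerProductSpace ℂ H] [CompleteSpace H]
    (ρ : ℝ) (hρ0 : 0 < ρ) (hρ1 : ρ < 1)
    (lam : ℂ) (hlam : lam ≠ 0) (harg : |lam.arg| < Real.pi)
    (hcard : ‖lam‖ < ρ * Real.cos (lam.arg / 2) ^ 2)
    (L : H →L[ℂ] H) (hL : IsSelfAdjoint L) :
    IsUnit (1 + ((Complex.I * (2 * lam) ^ (1 / 2 : ℂ)) / 2) • L) ∧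
      ‖(lam ^ (1 / 2 : ℂ)) •
          Ring.inverse (1 + ((Complex.I * (2 * lam) ^ (1 / 2 : ℂ)) / 2) • L)‖
        < Real.sqrt ρ :=
  stmt1_general ρ lam harg hcard L hL
end

section
/- There exists a constant C > 0 such that for every natural number Λ, the vacuum tadpole Π^Λ = Σ_{m=0}^{Λ} (Σ_{q=0}^{Λ} 1/(m+q+1))² satisfies (log 2)²·(Λ+1) ≤ Π^Λ ≤ C·(Λ+1); i.e. Π^Λ grows linearly in the ultraviolet cutoff Λ. -/
/-!
Lower bound: comparing with `log`, each row satisfies `T^Λ_m ≥ log ((m+Λ+2)/(m+1)) ≥ log 2` for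
`m ≤ Λ`.

Upper bound: a Schur test. Cauchy–Schwarz with weights `(q+1)^{-1/2}` gives
`(T^Λ_m)² ≤ S · ∑_q √(q+1)/(m+q+1)²` with `S = ∑_{q ≤ Λ} (q+1)^{-1/2} ≤ 2√(Λ+1)`; summing over `m`
first, `∑_m (m+q+1)^{-2} ≤ 2/(q+1)`, hence `Π^Λ ≤ 2S² ≤ 8(Λ+1)`.
-/

open Finset Real

lemma log_add_sub_log_le_sum_inv {a : ℝ} (ha : 0 < a) (n : ℕ) :
    log (a + n) - log a ≤ ∑ q ∈ range n, 1 / (a + q) := by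
  have tel := sum_range_sub (fun q : ℕ ↦ log (a + q)) n
  simp only [Nat.cast_zero, add_zero] at tel
  rw [← tel]
  refine sum_le_sum fun q _ ↦ ?_
  have hq : 0 < a + q := by positivity
  have := log_le_sub_one_of_pos (div_pos (by positivity : 0 < a + q + 1) hq)
  rw [log_div (by positivity) hq.ne', add_div, div_self hq.ne'] at this
  push_cast
  rw [← add_assoc]
  linarith

lemma sum_range_inv_sqrt_succ_le (n : ℕ) : ∑ q ∈ range n, 1 / √(q + 1) ≤ 2 * √n := by
  induction n with
  | zero => simp
  | succ n ih =>
    rw [sum_range_succ]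
    have hpos : 0 < √(n + 1) := sqrt_pos.2 (by positivity)
    have hmono : √n ≤ √(n + 1) := sqrt_le_sqrt (by linarith)
    -- `√(n+1) - √n = 1 / (√(n+1) + √n) ≥ 1 / (2√(n+1))`
    have step : 1 / √(n + 1) ≤ 2 * √(n + 1) - 2 * √n := by
      rw [div_le_iff₀ hpos]
      nlinarith [sq_sqrt (Nat.cast_nonneg (α := ℝ) n), sq_sqrt (by positivity : (0:ℝ) ≤ n + 1)]
    push_cast
    linarith

lemma sum_range_inv_sq_add_le (q n : ℕ) :
    ∑ m ∈ range n, 1 / ((m : ℝ) + q + 1) ^ 2 ≤ 2 / ((q : ℝ) + 1) := by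
  have h := sum_Ioo_inv_sq_le (α := ℝ) q (q + 1 + n)
  rw [← Ico_add_one_left_eq_Ioo, sum_Ico_eq_sum_range, Nat.add_sub_cancel_left] at h
  refine le_of_eq_of_le (sum_congr rfl fun m _ ↦ ?_) h
  push_cast
  ring

/-- The paper's `T^Λ_m`. -/
noncomputable def tadpoleRow (Λ m : ℕ) : ℝ := ∑ q ∈ range (Λ + 1), 1 / ((m : ℝ) + q + 1)

/-- The paper's `Π^Λ`. -/
noncomputable def vacuumTadpole (Λ : ℕ) : ℝ := ∑ m ∈ range (Λ + 1), tadpoleRow Λ m ^ 2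

lemma log_two_le_tadpoleRow {Λ m : ℕ} (hm : m ≤ Λ) : log 2 ≤ tadpoleRow Λ m := by
  have hm' : (m : ℝ) ≤ Λ := Nat.cast_le.2 hm
  have h := log_add_sub_log_le_sum_inv (a := (m : ℝ) + 1) (by positivity) (Λ + 1)
  rw [← log_div (by positivity) (by positivity)] at h
  calc log 2 ≤ log (((m : ℝ) + 1 + (Λ + 1 : ℕ)) / (m + 1)) := by
        refine log_le_log two_pos ?_
        rw [le_div_iff₀ (by positivity)]
        push_cast
        linarith
    _ ≤ tadpoleRow Λ m := by simpa only [tadpoleRow, add_right_comm] using h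

lemma log_two_sq_mul_le_vacuumTadpole (Λ : ℕ) : log 2 ^ 2 * (Λ + 1) ≤ vacuumTadpole Λ :=
  calc log 2 ^ 2 * (Λ + 1) = ∑ _m ∈ range (Λ + 1), log 2 ^ 2 := by simp [mul_comm]
    _ ≤ vacuumTadpole Λ := sum_le_sum fun m hm ↦ pow_le_pow_left₀ (log_nonneg one_le_two)
          (log_two_le_tadpoleRow (Nat.lt_succ_iff.1 (mem_range.1 hm))) 2

lemma tadpoleRow_sq_le (Λ m : ℕ) :
    tadpoleRow Λ m ^ 2 ≤ (∑ q ∈ range (Λ + 1), 1 / √(q + 1)) *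
      ∑ q ∈ range (Λ + 1), √(q + 1) / ((m : ℝ) + q + 1) ^ 2 := by
  have h := sq_sum_div_le_sum_sq_div (range (Λ + 1)) (fun q : ℕ ↦ 1 / ((m : ℝ) + q + 1))
    (g := fun q : ℕ ↦ 1 / √(q + 1)) (fun q _ ↦ by positivity)
  rw [div_le_iff₀ (sum_pos (fun q _ ↦ by positivity) nonempty_range_add_one)] at h
  refine h.trans_eq ?_
  rw [mul_comm]
  congr 1
  exact sum_congr rfl fun q _ ↦ by field_simp

lemma vacuumTadpole_le (Λ : ℕ) : vacuumTadpole Λ ≤ 8 * (Λ + 1) := by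
  have hS := sum_range_inv_sqrt_succ_le (Λ + 1)
  push_cast at hS
  set S := ∑ q ∈ range (Λ + 1), 1 / √((q : ℝ) + 1)
  have hS₀ : 0 ≤ S := sum_nonneg fun q _ ↦ by positivity
  have hcol (q : ℕ) :
      ∑ m ∈ range (Λ + 1), √(q + 1) / ((m : ℝ) + q + 1) ^ 2 ≤ 2 * (1 / √(q + 1)) :=
    calc ∑ m ∈ range (Λ + 1), √(q + 1) / ((m : ℝ) + q + 1) ^ 2
        = √(q + 1) * ∑ m ∈ range (Λ + 1), 1 / ((m : ℝ) + q + 1) ^ 2 := by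
          simp only [mul_sum, mul_one_div]
      _ ≤ √(q + 1) * (2 / (q + 1)) := by gcongr; exact sum_range_inv_sq_add_le q _
      _ = 2 * (1 / √(q + 1)) := by rw [mul_div_left_comm, sqrt_div_self']
  calc vacuumTadpole Λ
      ≤ ∑ m ∈ range (Λ + 1), S * ∑ q ∈ range (Λ + 1), √(q + 1) / ((m : ℝ) + q + 1) ^ 2 :=
        sum_le_sum fun m _ ↦ tadpoleRow_sq_le Λ m
    _ = S * ∑ q ∈ range (Λ + 1), ∑ m ∈ range (Λ + 1), √(q + 1) / ((m : ℝ) + q + 1) ^ 2 := by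
        rw [← mul_sum, sum_comm]
    _ ≤ S * ∑ q ∈ range (Λ + 1), 2 * (1 / √((q : ℝ) + 1)) := by gcongr with q; exact hcol q
    _ = 2 * S ^ 2 := by rw [← mul_sum]; ring
    _ ≤ 2 * (2 * √(Λ + 1)) ^ 2 := by gcongr
    _ = 8 * (Λ + 1) := by rw [mul_pow, sq_sqrt (by positivity)]; ring

/-- There is a constant `C > 0` such that for every cutoff `Λ`, the
vacuum tadpole `Π^Λ = Σ_{m=0}^{Λ} (Σ_{q=0}^{Λ} 1/(m+q+1))²` satisfies
`(log 2)²·(Λ+1) ≤ Π^Λ ≤ C·(Λ+1)`: it grows linearly in `Λ`. -/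
theorem stmt4 :
    ∃ C : ℝ, 0 < C ∧ ∀ Λ : ℕ,
      Real.log 2 ^ 2 * ((Λ : ℝ) + 1)
          ≤ ∑ m ∈ Finset.range (Λ + 1),
              (∑ q ∈ Finset.range (Λ + 1), (1 : ℝ) / (m + q + 1)) ^ 2 ∧
        ∑ m ∈ Finset.range (Λ + 1),
            (∑ q ∈ Finset.range (Λ + 1), (1 : ℝ) / (m + q + 1)) ^ 2
          ≤ C * ((Λ : ℝ) + 1) :=
  ⟨8, by norm_num, fun Λ ↦ ⟨log_two_sq_mul_le_vacuumTadpole Λ, vacuumTadpole_le Λ⟩⟩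
end

section
/- (Nelson's bound) Let T be a Hermitian N×N complex matrix, let μ be a probability measure on the real vector space of Hermitian N×N complex matrices, and let λ ∈ ℂ with Re λ ≥ 0. Then the partition-function integral satisfies |∫ exp(−(λ/4)·(Tr(φ⁴) − 4·Tr(φ²·T) + 2·Tr(T²))) dμ(φ)| ≤ exp((Re λ/2)·Re(Tr(T²))). -/
/-!
Completing the square, `Tr φ⁴ - 4 Tr(φ² T) + 2 Tr T² = Tr((φ² - 2T)²) - 2 Tr T²`, and the trace of
the square of a Hermitian matrix is a nonnegative real number. Hence for Hermitian `φ` the exponent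
has real part at most `(Re λ / 2) Tr T²`, so the integrand is bounded pointwise by the right-hand
side, and so is its integral against a probability measure.
-/

open MeasureTheory

/-- Matrices over a measurable space form a measurable space (entrywise). -/
instance matrixMeasurableSpace {m n α : Type*} [MeasurableSpace α] :
    MeasurableSpace (Matrix m n α) :=
  MeasurableSpace.pi (X := fun _ : m => n → α)

open scoped ComplexOrder

namespace Matrix

variable {n R : Type*} [Fintype n] [DecidableEq n]

theorem IsHermitian.trace_sq_nonneg [CommRing R] [PartialOrder R] [StarRing R]
    [StarOrderedRing R] {A : Matrix n n R} (hA : A.IsHermitian) : 0 ≤ (A ^ 2).trace := by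
  simpa [sq, hA.eq] using (posSemidef_conjTranspose_mul_self A).trace_nonneg

theorem trace_sub_two_nsmul_sq [CommRing R] (P T : Matrix n n R) :
    ((P - 2 • T) ^ 2).trace = (P ^ 2).trace - 4 * (P * T).trace + 4 * (T ^ 2).trace := by
  have h_expand : (P - 2 • T) ^ 2 = P ^ 2 - 2 • (P * T) - 2 • (T * P) + 4 • T ^ 2 := by
    noncomm_ring
  rw [h_expand]
  simp only [trace_add, trace_sub, trace_smul, trace_mul_comm T P]
  ring

end Matrix

theorem Complex.norm_exp_neg_mul_le {lam z c : ℂ} (hlam : 0 ≤ lam.re) (hc : 0 ≤ c)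
    (hz : 0 ≤ z + 2 * c) :
    ‖Complex.exp (-(lam / 4) * z)‖ ≤ Real.exp (lam.re / 2 * c.re) := by
  obtain ⟨hzc_re, hzc_im⟩ := Complex.nonneg_iff.1 hz
  obtain ⟨-, hc_im⟩ := Complex.nonneg_iff.1 hc
  have hz_im : z.im = 0 := by simp [← hc_im] at hzc_im; linarith
  have hz_re : 0 ≤ z.re + 2 * c.re := by simpa [← hc_im] using hzc_re
  have h_re : (-(lam / 4) * z).re = -(lam.re / 4) * z.re := by simp [hz_im]
  rw [Complex.norm_exp, h_re, Real.exp_le_exp]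
  nlinarith [mul_nonneg hlam hz_re]

/-- **Nelson's bound.** Let `T` be a Hermitian `N×N` complex matrix, `μ` a
probability measure on Hermitian `N×N` matrices, and `λ ∈ ℂ` with `Re λ ≥ 0`. Then
`|∫ exp(−(λ/4)·(Tr(φ⁴) − 4·Tr(φ²·T) + 2·Tr(T²))) dμ(φ)| ≤ exp((Re λ/2)·Re(Tr(T²)))`. -/
theorem stmt7 {N : ℕ} (T : Matrix (Fin N) (Fin N) ℂ) (hT : T.IsHermitian)
    (μ : Measure (Matrix (Fin N) (Fin N) ℂ)) [IsProbabilityMeasure μ]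
    (hμ : ∀ᵐ φ ∂μ, Matrix.IsHermitian φ)
    (lam : ℂ) (hlam : 0 ≤ lam.re) :
    ‖∫ φ, Complex.exp (-(lam / 4) *
        ((φ ^ 4).trace - 4 * (φ ^ 2 * T).trace + 2 * (T ^ 2).trace)) ∂μ‖
      ≤ Real.exp (lam.re / 2 * ((T ^ 2).trace).re) := by
  refine (norm_integral_le_of_norm_le_const ?_).trans_eq (by rw [probReal_univ, mul_one])
  filter_upwards [hμ] with φ hφ
  refine Complex.norm_exp_neg_mul_le hlam hT.trace_sq_nonneg ?_
  have h_square := ((hφ.pow 2).sub (hT.smul (.all 2))).trace_sq_nonneg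
  rw [Matrix.trace_sub_two_nsmul_sq, ← pow_mul] at h_square
  convert h_square using 1
  ring
end

section
/- Let M ≥ 2 and j ≥ 0 be integers and let ω be an integer with M^j ≤ ω ≤ M^{j+1} − 1. Then the double sum Σ_{m=M^j}^{ω} Σ_{p=0}^{ω−m} 1/(m+p+1) is at most (1 + log M)·(ω + 1); consequently the trace (1/(ω+1))·Σ_{m=M^j}^{ω} Σ_{p=0}^{ω−m} 1/(m+p+1) of the sliced quadratic kernel at refined scale ω is bounded by 1 + log M, uniformly in j and ω. -/
/-!
Each inner sum is a stretch of the harmonic series, `Σ_{k=m+1}^{ω+1} 1/k ≤ log ((ω + 1) / m)`,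
and on the slice `ω + 1 ≤ M^{j+1} ≤ M m`, so it is at most `log M`. There are at most `ω + 1`
values of `m`.
-/

open Finset Real

lemma one_div_add_one_le_log_sub_log {x : ℝ} (hx : 0 < x) :
    1 / (x + 1) ≤ log (x + 1) - log x := by
  have h := one_sub_inv_le_log_of_pos (x := (x + 1) / x) (by positivity)
  rwa [log_div (by positivity) hx.ne', inv_div, one_sub_div (by positivity), add_sub_cancel_left]
    at h

lemma sum_range_one_div_le_log_sub_log {x : ℝ} (hx : 0 < x) (n : ℕ) :
    ∑ p ∈ range n, 1 / (x + p + 1) ≤ log (x + n) - log x :=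
  calc ∑ p ∈ range n, 1 / (x + p + 1)
      ≤ ∑ p ∈ range n, (log (x + (p + 1 : ℕ)) - log (x + p)) := by
        gcongr with p
        push_cast
        rw [← add_assoc]
        exact one_div_add_one_le_log_sub_log (by positivity)
    _ = log (x + n) - log x := by
        rw [sum_range_sub (fun p : ℕ ↦ log (x + p))]
        simp

lemma sum_range_one_div_le_log_of_add_one_le_mul {M : ℝ} {m ω : ℕ} (hm : 0 < m) (hmω : m ≤ ω)
    (hω : (ω : ℝ) + 1 ≤ M * m) :
    ∑ p ∈ range (ω - m + 1), (1 : ℝ) / (m + p + 1) ≤ log M := by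
  have hm' : (0 : ℝ) < m := by exact_mod_cast hm
  have hend : (m : ℝ) + (ω - m + 1 : ℕ) = ω + 1 := by
    push_cast [Nat.cast_sub hmω]
    ring
  calc ∑ p ∈ range (ω - m + 1), (1 : ℝ) / (m + p + 1)
      ≤ log (ω + 1) - log m := hend ▸ sum_range_one_div_le_log_sub_log hm' _
    _ = log ((ω + 1) / m) := (log_div (by positivity) hm'.ne').symm
    _ ≤ log M := log_le_log (by positivity) ((div_le_iff₀ hm').2 hω)

lemma add_one_le_mul_of_le_pow_succ_sub_one {M j m ω : ℕ} (hM : 0 < M) (hm : M ^ j ≤ m)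
    (hω : ω ≤ M ^ (j + 1) - 1) : ω + 1 ≤ M * m := by
  have hpow : 0 < M ^ (j + 1) := pow_pos hM _
  calc ω + 1 ≤ M ^ (j + 1) := by omega
    _ = M * M ^ j := pow_succ' M j
    _ ≤ M * m := Nat.mul_le_mul_left M hm

lemma sum_Icc_pow_sum_range_le_mul_log {M j ω : ℕ} (hM : 0 < M) (hω : ω ≤ M ^ (j + 1) - 1) :
    ∑ m ∈ Icc (M ^ j) ω, ∑ p ∈ range (ω - m + 1), (1 : ℝ) / (m + p + 1)
      ≤ ((ω : ℝ) + 1) * log M := by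
  have hinner : ∀ m ∈ Icc (M ^ j) ω,
      ∑ p ∈ range (ω - m + 1), (1 : ℝ) / (m + p + 1) ≤ log M := by
    intro m hm
    rw [mem_Icc] at hm
    refine sum_range_one_div_le_log_of_add_one_le_mul ((pow_pos hM j).trans_le hm.1) hm.2 ?_
    exact_mod_cast add_one_le_mul_of_le_pow_succ_sub_one hM hm.1 hω
  have hcard : ((Icc (M ^ j) ω).card : ℝ) ≤ ω + 1 := by
    rw [Nat.card_Icc]
    exact_mod_cast Nat.sub_le _ _
  calc _ ≤ (Icc (M ^ j) ω).card • log M := sum_le_card_nsmul _ _ _ hinner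
    _ ≤ ((ω : ℝ) + 1) * log M := by
        rw [nsmul_eq_mul]
        exact mul_le_mul_of_nonneg_right hcard (log_natCast_nonneg M)

theorem stmt16_general (M j ω : ℕ) (hM : 2 ≤ M) (hhi : ω ≤ M ^ (j + 1) - 1) :
    (∑ m ∈ Finset.Icc (M ^ j) ω, ∑ p ∈ Finset.range (ω - m + 1), (1 : ℝ) / (m + p + 1))
        ≤ (1 + Real.log M) * ((ω : ℝ) + 1) ∧
      (1 / ((ω : ℝ) + 1)) *
          ∑ m ∈ Finset.Icc (M ^ j) ω, ∑ p ∈ Finset.range (ω - m + 1), (1 : ℝ) / (m + p + 1)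
        ≤ 1 + Real.log M := by
  have hsum := sum_Icc_pow_sum_range_le_mul_log (by omega : 0 < M) hhi
  have hω : (0 : ℝ) < ω + 1 := by positivity
  have hbound : ((ω : ℝ) + 1) * log M ≤ (1 + log M) * ((ω : ℝ) + 1) := by nlinarith
  refine ⟨hsum.trans hbound, ?_⟩
  rw [one_div, inv_mul_le_iff₀ hω, mul_comm]
  exact hsum.trans hbound

/-- For integers `M ≥ 2`, `j ≥ 0` and a refined scale
`ω ∈ [M^j, M^{j+1}−1]`, the double sum `Σ_{m=M^j}^{ω} Σ_{p=0}^{ω−m} 1/(m+p+1)` is at most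
`(1 + log M)·(ω+1)`; consequently the trace
`(1/(ω+1))·Σ_{m=M^j}^{ω} Σ_{p=0}^{ω−m} 1/(m+p+1)` of the sliced quadratic kernel is
bounded by `1 + log M`, uniformly in `j` and `ω`. -/
theorem stmt16 (M j ω : ℕ) (hM : 2 ≤ M) (hlo : M ^ j ≤ ω) (hhi : ω ≤ M ^ (j + 1) - 1) :
    (∑ m ∈ Finset.Icc (M ^ j) ω, ∑ p ∈ Finset.range (ω - m + 1), (1 : ℝ) / (m + p + 1))
        ≤ (1 + Real.log M) * ((ω : ℝ) + 1) ∧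
      (1 / ((ω : ℝ) + 1)) *
          ∑ m ∈ Finset.Icc (M ^ j) ω, ∑ p ∈ Finset.range (ω - m + 1), (1 : ℝ) / (m + p + 1)
        ≤ 1 + Real.log M :=
  stmt16_general M j ω hM hhi
end
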